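/- arXiv:1504.05311 — 2 statements merged into one kernel-verified Lean document; each statement's English description precedes it below -/
import Mathlib

section
/- With A, B Hermitian PSD, c₀ > 0, P_i > 0, and Σ_i D_i positive definite, the feasible set {(Y, ν) : Y ⪰ 0, ν ≥ 0, Tr(B Y) + c₀ ν = 1, Tr(D_i Y) ≤ P_i ν ∀i} is compact (closed and bounded), and hence the SDP of maximizing Tr(A Y) over it attains its maximum. -/
/-! The normalisation `Tr(B Y) + c₀ ν = 1` with `B ⪰ 0` forces `0 ≤ ν ≤ 1/c₀`. If `ε > 0` is a
lower bound for the spectrum of `∑ i, D i`, then `ε Tr Y ≤ Tr((∑ i, D i) Y) ≤ (∑ i, P i) ν`, and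
every entry of a positive semidefinite matrix is bounded in norm by its trace. The feasible set is
therefore a closed subset of a compact box, hence compact; it contains `(0, 1/c₀)`, so the
continuous objective attains its maximum on it. -/

open Matrix ComplexOrder
open scoped MatrixOrder

namespace Matrix

variable {n 𝕜 : Type*} [RCLike 𝕜]

lemma isCompact_setOf_norm_apply_le {m E : Type*} [SeminormedAddCommGroup E] [ProperSpace E]
    (r : ℝ) : IsCompact {A : Matrix m n E | ∀ i j, ‖A i j‖ ≤ r} := by
  have h := isCompact_univ_pi fun _ : m ↦ isCompact_univ_pi fun _ : n ↦
    isCompact_closedBall (0 : E) r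
  simp only [Set.pi, Set.mem_univ, Metric.mem_closedBall, dist_zero_right, forall_const] at h
  exact h

lemma PosSemidef.norm_apply_sq_le {A : Matrix n n 𝕜} (hA : A.PosSemidef) (i j : n) :
    ‖A i j‖ ^ 2 ≤ RCLike.re (A i i) * RCLike.re (A j j) := by
  have hdet := (hA.submatrix ![i, j]).det_nonneg
  simp only [det_fin_two, submatrix_apply, cons_val_zero, cons_val_one, cons_val_fin_one,
    sub_nonneg] at hdet
  have hji : A j i = starRingEnd 𝕜 (A i j) := (hA.isHermitian.apply j i).symm
  have him : ∀ k, RCLike.im (A k k) = 0 := fun k ↦ (RCLike.nonneg_iff.mp hA.diag_nonneg).2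
  have hre := (RCLike.le_iff_re_im.mp hdet).1
  rw [hji, RCLike.mul_conj, RCLike.mul_re, him, him, mul_zero, sub_zero] at hre
  exact_mod_cast hre

variable [Fintype n]

lemma PosSemidef.re_apply_le_re_trace {A : Matrix n n 𝕜} (hA : A.PosSemidef) (i : n) :
    RCLike.re (A i i) ≤ RCLike.re A.trace := by
  rw [trace, map_sum]
  exact Finset.single_le_sum (f := fun j ↦ RCLike.re (A j j))
    (fun j _ ↦ (RCLike.nonneg_iff.mp hA.diag_nonneg).1) (Finset.mem_univ i)

lemma PosSemidef.norm_apply_le_re_trace {A : Matrix n n 𝕜} (hA : A.PosSemidef) (i j : n) :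
    ‖A i j‖ ≤ RCLike.re A.trace := by
  have hdiag : ∀ k, 0 ≤ RCLike.re (A k k) := fun k ↦ (RCLike.nonneg_iff.mp hA.diag_nonneg).1
  have htr : 0 ≤ RCLike.re A.trace := (hdiag i).trans (hA.re_apply_le_re_trace i)
  refine (pow_le_pow_iff_left₀ (norm_nonneg _) htr two_ne_zero).mp ?_
  calc ‖A i j‖ ^ 2 ≤ RCLike.re (A i i) * RCLike.re (A j j) := hA.norm_apply_sq_le i j
    _ ≤ RCLike.re A.trace ^ 2 := by
      rw [sq]
      exact mul_le_mul (hA.re_apply_le_re_trace i) (hA.re_apply_le_re_trace j) (hdiag j) htr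

lemma PosSemidef.trace_mul_nonneg {A B : Matrix n n 𝕜} (hA : A.PosSemidef) (hB : B.PosSemidef) :
    0 ≤ (A * B).trace := by
  classical
  obtain ⟨X, rfl⟩ := CStarAlgebra.nonneg_iff_eq_star_mul_self.mp hA.nonneg
  rw [star_eq_conjTranspose, Matrix.mul_assoc, trace_mul_comm]
  exact (hB.mul_mul_conjTranspose_same X).trace_nonneg

lemma PosDef.exists_pos_mul_re_trace_le {A : Matrix n n 𝕜} (hA : A.PosDef) :
    ∃ ε > 0, ∀ Y : Matrix n n 𝕜, Y.PosSemidef →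
      ε * RCLike.re Y.trace ≤ RCLike.re (A * Y).trace := by
  classical
  cases isEmpty_or_nonempty n
  · exact ⟨1, one_pos, fun Y _ ↦ by simp [trace]⟩
  obtain ⟨ε, hε, hεA⟩ := (CFC.exists_pos_algebraMap_le_iff hA.isHermitian.isSelfAdjoint).mpr
    fun x hx ↦ hA.isStrictlyPositive.spectrum_pos hx
  refine ⟨ε, hε, fun Y hY ↦ ?_⟩
  have h := (RCLike.nonneg_iff.mp ((le_iff.mp hεA).trace_mul_nonneg hY)).1
  rwa [sub_mul, trace_sub, Algebra.algebraMap_eq_smul_one, smul_mul, one_mul, trace_smul,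
    map_sub, sub_nonneg, RCLike.smul_re] at h

lemma isClosed_setOf_posSemidef : IsClosed {A : Matrix n n 𝕜 | A.PosSemidef} := by
  simp_rw [posSemidef_iff_dotProduct_mulVec, Set.ofPred_and, Set.ofPred_forall]
  exact (isClosed_eq continuous_id.matrix_conjTranspose continuous_id).inter <|
    isClosed_iInter fun x ↦ isClosed_le continuous_const <|
      continuous_const.dotProduct (continuous_id.matrix_mulVec continuous_const)

end Matrix

section Feasibility

variable {n ι : Type*} [Fintype n]

def sdpFeasibleSet (B : Matrix n n ℂ) (D : ι → Matrix n n ℂ) (c₀ : ℝ) (P : ι → ℝ) :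
    Set (Matrix n n ℂ × ℝ) :=
  {p | p.1.PosSemidef ∧ 0 ≤ p.2 ∧ ((B * p.1).trace).re + c₀ * p.2 = 1 ∧
    ∀ i, ((D i * p.1).trace).re ≤ P i * p.2}

variable {B : Matrix n n ℂ} {D : ι → Matrix n n ℂ} {c₀ : ℝ} {P : ι → ℝ}

lemma continuous_re_trace_mul (C : Matrix n n ℂ) :
    Continuous fun Y : Matrix n n ℂ ↦ ((C * Y).trace).re :=
  Complex.continuous_re.comp (continuous_const.matrix_mul continuous_id).matrix_trace

lemma isClosed_sdpFeasibleSet : IsClosed (sdpFeasibleSet B D c₀ P) := by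
  have htrace (C : Matrix n n ℂ) := (continuous_re_trace_mul C).comp (continuous_fst (Y := ℝ))
  have hlin (a : ℝ) : Continuous fun p : Matrix n n ℂ × ℝ ↦ a * p.2 :=
    continuous_const.mul continuous_snd
  simp_rw [sdpFeasibleSet, Set.ofPred_and, Set.ofPred_forall]
  exact (isClosed_setOf_posSemidef.preimage continuous_fst).inter <|
    (isClosed_le continuous_const continuous_snd).inter <|
    (isClosed_eq ((htrace B).add (hlin c₀)) continuous_const).inter <|
    isClosed_iInter fun i ↦ isClosed_le (htrace (D i)) (hlin (P i))

lemma inv_mem_sdpFeasibleSet (hc₀ : 0 < c₀) (hP : ∀ i, 0 ≤ P i) :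
    ((0 : Matrix n n ℂ), c₀⁻¹) ∈ sdpFeasibleSet B D c₀ P := by
  refine ⟨.zero, by positivity, by simp [hc₀.ne'], fun i ↦ ?_⟩
  simpa using mul_nonneg (hP i) (inv_nonneg.mpr hc₀.le)

lemma snd_mem_Icc_of_mem_sdpFeasibleSet (hB : B.PosSemidef) (hc₀ : 0 < c₀)
    {p : Matrix n n ℂ × ℝ} (hp : p ∈ sdpFeasibleSet B D c₀ P) :
    p.2 ∈ Set.Icc 0 c₀⁻¹ := by
  obtain ⟨hY, hν, hconstraint, -⟩ := hp
  have hBY : 0 ≤ ((B * p.1).trace).re := (Complex.nonneg_iff.mp (hB.trace_mul_nonneg hY)).1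
  refine ⟨hν, ?_⟩
  rw [← one_div, le_div_iff₀ hc₀]
  linarith

variable [Fintype ι]

lemma sdpFeasibleSet_subset_prod (hB : B.PosSemidef) (hD : (∑ i, D i).PosDef)
    (hc₀ : 0 < c₀) :
    ∃ r, sdpFeasibleSet B D c₀ P ⊆ {Y | ∀ j k, ‖Y j k‖ ≤ r} ×ˢ Set.Icc 0 c₀⁻¹ := by
  obtain ⟨ε, hε, hεD⟩ := hD.exists_pos_mul_re_trace_le
  refine ⟨|∑ i, P i| * c₀⁻¹ / ε, fun p hp ↦ ?_⟩
  have hνIcc := snd_mem_Icc_of_mem_sdpFeasibleSet hB hc₀ hp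
  refine ⟨fun j k ↦ ?_, hνIcc⟩
  obtain ⟨hν₀, hν⟩ := hνIcc
  obtain ⟨hY, -, -, hDY⟩ := hp
  have htrace : ε * p.1.trace.re ≤ |∑ i, P i| * c₀⁻¹ := calc
    ε * p.1.trace.re ≤ (((∑ i, D i) * p.1).trace).re := hεD p.1 hY
    _ = ∑ i, ((D i * p.1).trace).re := by rw [Finset.sum_mul, trace_sum, Complex.re_sum]
    _ ≤ ∑ i, P i * p.2 := Finset.sum_le_sum fun i _ ↦ hDY i
    _ = (∑ i, P i) * p.2 := (Finset.sum_mul ..).symm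
    _ ≤ |∑ i, P i| * c₀⁻¹ := mul_le_mul (le_abs_self _) hν hν₀ (abs_nonneg _)
  rw [le_div_iff₀' hε]
  exact (mul_le_mul_of_nonneg_left (hY.norm_apply_le_re_trace j k) hε.le).trans htrace

lemma isCompact_sdpFeasibleSet (hB : B.PosSemidef) (hD : (∑ i, D i).PosDef) (hc₀ : 0 < c₀) :
    IsCompact (sdpFeasibleSet B D c₀ P) := by
  obtain ⟨r, hr⟩ := sdpFeasibleSet_subset_prod hB hD hc₀
  exact ((isCompact_setOf_norm_apply_le r).prod isCompact_Icc).of_isClosed_subset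
    isClosed_sdpFeasibleSet hr

end Feasibility

theorem stmt_7_general {d L : ℕ} (A B : Matrix (Fin d) (Fin d) ℂ)
    (hB : B.PosSemidef)
    (D : Fin L → Matrix (Fin d) (Fin d) ℂ)
    (hDsum : (∑ i, D i).PosDef)
    (c₀ : ℝ) (hc₀ : 0 < c₀) (P : Fin L → ℝ) (hP : ∀ i, 0 < P i)
    (S : Set (Matrix (Fin d) (Fin d) ℂ × ℝ))
    (hS : S = {p | p.1.PosSemidef ∧ 0 ≤ p.2 ∧
      ((B * p.1).trace).re + c₀ * p.2 = 1 ∧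
      ∀ i, ((D i * p.1).trace).re ≤ P i * p.2}) :
    IsCompact S ∧ ∃ p ∈ S, ∀ q ∈ S, ((A * q.1).trace).re ≤ ((A * p.1).trace).re := by
  subst hS
  have hcompact : IsCompact (sdpFeasibleSet B D c₀ P) := isCompact_sdpFeasibleSet hB hDsum hc₀
  obtain ⟨p, hp, hmax⟩ := hcompact.exists_isMaxOn
    ⟨_, inv_mem_sdpFeasibleSet hc₀ fun i ↦ (hP i).le⟩
    ((continuous_re_trace_mul A).comp continuous_fst).continuousOn
  exact ⟨hcompact, p, hp, fun q hq ↦ hmax hq⟩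

/-- solvability of (P3): the feasible set is compact and the
SDP attains its maximum. -/
theorem stmt_7 {d L : ℕ} (A B : Matrix (Fin d) (Fin d) ℂ)
    (hA : A.PosSemidef) (hB : B.PosSemidef)
    (D : Fin L → Matrix (Fin d) (Fin d) ℂ) (hD : ∀ i, (D i).PosSemidef)
    (hDsum : (∑ i, D i).PosDef)
    (c₀ : ℝ) (hc₀ : 0 < c₀) (P : Fin L → ℝ) (hP : ∀ i, 0 < P i)
    (S : Set (Matrix (Fin d) (Fin d) ℂ × ℝ))
    (hS : S = {p | p.1.PosSemidef ∧ 0 ≤ p.2 ∧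
      ((B * p.1).trace).re + c₀ * p.2 = 1 ∧
      ∀ i, ((D i * p.1).trace).re ≤ P i * p.2}) :
    IsCompact S ∧ ∃ p ∈ S, ∀ q ∈ S, ((A * q.1).trace).re ≤ ((A * p.1).trace).re :=
  stmt_7_general A B hB D hDsum c₀ hc₀ P hP S hS
end

section
/- Let h ∈ ℂᴺ be nonzero, β ∈ ℂ nonzero, σ² > 0, P̄ > 0, and α ∈ ℝ with ασ² ≤ 1. Then the minimizer of g(f) = (ασ²−1)|hᴴf|² − 2 Re(β hᴴ f) over {f : ‖f‖₂² ≤ P̄} is f⋆ = √P̄ β̄ h/(|β| ‖h‖₂), i.e. the full-power vector aligned with β̄ h. -/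
/-!
Write `z = ⟪h, f⟫`. Since `Re (β z) ≤ ‖β‖ ‖z‖` and the quadratic coefficient `c = ασ² - 1` is
nonpositive, the objective is bounded below by `c t² - 2 ‖β‖ t` with `t = ‖z‖`, a function
nonincreasing in `t ≥ 0`. Cauchy–Schwarz gives `‖z‖ ≤ √P̄ ‖h‖` on the ball, and the full-power
vector along `β̄ h` attains both bounds with equality.
-/

open scoped InnerProductSpace ComplexConjugate

lemma le_sub_re_mul_of_norm_le {c : ℝ} (hc : c ≤ 0) (β z : ℂ) {M : ℝ} (hz : ‖z‖ ≤ M) :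
    c * M ^ 2 - 2 * (‖β‖ * M) ≤ c * ‖z‖ ^ 2 - 2 * (β * z).re := by
  have hre : (β * z).re ≤ ‖β‖ * M := calc
    (β * z).re ≤ ‖β * z‖ := Complex.re_le_norm _
    _ ≤ ‖β‖ * M := by rw [norm_mul]; gcongr
  have hsq : c * M ^ 2 ≤ c * ‖z‖ ^ 2 :=
    mul_le_mul_of_nonpos_left (pow_le_pow_left₀ (norm_nonneg z) hz 2) hc
  linarith

section InnerProductSpace

variable {E : Type*} [NormedAddCommGroup E] [InnerProductSpace ℂ E]

-- When `β = 0` or `h = 0` the division by `0` makes this vector `0`, so its norm is only `≤ r`.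
noncomputable def alignedVector (r : ℝ) (β : ℂ) (h : E) : E :=
  ((r : ℂ) * conj β / ((‖β‖ : ℂ) * (‖h‖ : ℂ))) • h

lemma norm_alignedVector_le {r : ℝ} (hr : 0 ≤ r) (β : ℂ) (h : E) :
    ‖alignedVector r β h‖ ≤ r := by
  have : ‖alignedVector r β h‖ = r * (‖β‖ * ‖h‖ / (‖β‖ * ‖h‖)) := by
    simp only [alignedVector, norm_smul, norm_div, norm_mul, Complex.norm_real, Real.norm_eq_abs,
      abs_of_nonneg hr, abs_norm, Complex.norm_conj]
    ring
  rw [this]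
  exact mul_le_of_le_one_right hr (div_self_le_one _)

lemma mul_inner_alignedVector (r : ℝ) (β : ℂ) (h : E) :
    β * ⟪h, alignedVector r β h⟫_ℂ = ((r * ‖β‖ * ‖h‖ : ℝ) : ℂ) := by
  rw [alignedVector, inner_smul_right, inner_self_eq_norm_sq_to_K]
  calc β * ((r : ℂ) * conj β / ((‖β‖ : ℂ) * (‖h‖ : ℂ)) * (‖h‖ : ℂ) ^ 2)
      = r * ((‖β‖ * ‖h‖ : ℂ) * (‖β‖ * ‖h‖) / (‖β‖ * ‖h‖)) := by
        linear_combination ((r : ℂ) * (‖h‖ : ℂ) ^ 2 / ((‖β‖ : ℂ) * (‖h‖ : ℂ))) *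
          Complex.mul_conj' β
    _ = _ := by rw [mul_self_div_self]; push_cast; ring

lemma norm_inner_alignedVector {r : ℝ} (hr : 0 ≤ r) {β : ℂ} (hβ : β ≠ 0) (h : E) :
    ‖⟪h, alignedVector r β h⟫_ℂ‖ = r * ‖h‖ := by
  have := congrArg norm (mul_inner_alignedVector r β h)
  rw [norm_mul, Complex.norm_real, Real.norm_of_nonneg (by positivity)] at this
  have hβ' : 0 < ‖β‖ := norm_pos_iff.mpr hβ
  nlinarith

theorem isMinOn_alignedVector {c : ℝ} (hc : c ≤ 0) {β : ℂ} (hβ : β ≠ 0) (h : E) {r : ℝ}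
    (hr : 0 ≤ r) :
    IsMinOn (fun f => c * ‖⟪h, f⟫_ℂ‖ ^ 2 - 2 * (β * ⟪h, f⟫_ℂ).re) (Metric.closedBall 0 r)
      (alignedVector r β h) := by
  rw [isMinOn_iff]
  intro f hf
  rw [mem_closedBall_zero_iff] at hf
  have hbound : ‖⟪h, f⟫_ℂ‖ ≤ r * ‖h‖ := calc
    ‖⟪h, f⟫_ℂ‖ ≤ ‖h‖ * ‖f‖ := norm_inner_le_norm h f
    _ ≤ r * ‖h‖ := by rw [mul_comm]; gcongr
  simp only [norm_inner_alignedVector hr hβ, mul_inner_alignedVector,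
    Complex.ofReal_re]
  linarith [le_sub_re_mul_of_norm_le hc β _ hbound]

end InnerProductSpace

theorem stmt_15_general {N : ℕ} (h : Fin N → ℂ) (β : ℂ) (hβ : β ≠ 0)
    (σ2 Pb α : ℝ) (hPb : 0 < Pb) (h1 : α * σ2 ≤ 1)
    (g : (Fin N → ℂ) → ℝ)
    (hg : ∀ f, g f = (α * σ2 - 1) * ‖star h ⬝ᵥ f‖ ^ 2
      - 2 * (β * (star h ⬝ᵥ f)).re)
    (fs : Fin N → ℂ)
    (hfs : fs = ((Real.sqrt Pb : ℂ) * (starRingEnd ℂ) β /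
      ((‖β‖ : ℂ) * ((Real.sqrt (∑ i, ‖h i‖ ^ 2) : ℝ) : ℂ))) • h) :
    (∑ i, ‖fs i‖ ^ 2) ≤ Pb ∧
      ∀ f : Fin N → ℂ, (∑ i, ‖f i‖ ^ 2) ≤ Pb → g fs ≤ g f := by
  have hball (f : Fin N → ℂ) :
      WithLp.toLp 2 f ∈ Metric.closedBall 0 √Pb ↔ ∑ i, ‖f i‖ ^ 2 ≤ Pb := by
    rw [mem_closedBall_zero_iff, Real.le_sqrt (norm_nonneg _) hPb.le, EuclideanSpace.norm_sq_eq]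
  have hgE (f : Fin N → ℂ) : g f = (α * σ2 - 1) * ‖⟪WithLp.toLp 2 h, WithLp.toLp 2 f⟫_ℂ‖ ^ 2
      - 2 * (β * ⟪WithLp.toLp 2 h, WithLp.toLp 2 f⟫_ℂ).re := by
    rw [hg, EuclideanSpace.inner_toLp_toLp, dotProduct_comm]
  have hfsE : WithLp.toLp 2 fs = alignedVector √Pb β (WithLp.toLp 2 h) := by
    rw [hfs, alignedVector, EuclideanSpace.norm_eq]
    rfl
  have hmin := isMinOn_alignedVector (by linarith : α * σ2 - 1 ≤ 0) hβ (WithLp.toLp 2 h)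
    (Real.sqrt_nonneg Pb)
  refine ⟨(hball fs).mp ?_, fun f hf => ?_⟩
  · rw [hfsE, mem_closedBall_zero_iff]
    exact norm_alignedVector_le (Real.sqrt_nonneg Pb) β _
  rw [hgE, hgE, hfsE]
  exact hmin ((hball f).mpr hf)

/-- Theorem 6, Cases I and III, ασ² ≤ 1: the minimizer of
g(f) = (ασ²−1)|hᴴf|² − 2Re(β hᴴf) over the ball ‖f‖² ≤ P̄ is the full-power
vector f⋆ = √P̄ β̄ h/(|β|‖h‖). -/
theorem stmt_15 {N : ℕ} (h : Fin N → ℂ) (hh : h ≠ 0) (β : ℂ) (hβ : β ≠ 0)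
    (σ2 Pb α : ℝ) (hσ : 0 < σ2) (hPb : 0 < Pb) (h1 : α * σ2 ≤ 1)
    (g : (Fin N → ℂ) → ℝ)
    (hg : ∀ f, g f = (α * σ2 - 1) * ‖star h ⬝ᵥ f‖ ^ 2
      - 2 * (β * (star h ⬝ᵥ f)).re)
    (fs : Fin N → ℂ)
    (hfs : fs = ((Real.sqrt Pb : ℂ) * (starRingEnd ℂ) β /
      ((‖β‖ : ℂ) * ((Real.sqrt (∑ i, ‖h i‖ ^ 2) : ℝ) : ℂ))) • h) :
    (∑ i, ‖fs i‖ ^ 2) ≤ Pb ∧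
      ∀ f : Fin N → ℂ, (∑ i, ‖f i‖ ^ 2) ≤ Pb → g fs ≤ g f :=
  stmt_15_general h β hβ σ2 Pb α hPb h1 g hg fs hfs
end
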